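/- Let U ∈ L be a two-qubit unitary. Then U admits a perfect LOBC simulation consuming two ebits: there exist finite outcome sets 𝒜 and ℬ each of size at most 16, Kraus operators A_a : ℂ²⊗ℂ⁴ → ℂ² with Σ_{a∈𝒜} A_a†A_a = I and B_b : ℂ²⊗ℂ⁴ → ℂ² with Σ_{b∈ℬ} B_b†B_b = I, correction unitaries W_{ab}, V_{ab} ∈ U(2), and amplitudes γ_{ab} ∈ ℂ with Σ_{a,b}|γ_{ab}|² = 1, such that (W_{ab}⊗V_{ab})(A_a⊗B_b)(ψ⊗|Φ₄⁺⟩) = γ_{ab}·Uψ for every ψ ∈ ℂ²⊗ℂ² and every (a,b) ∈ 𝒜×ℬ; here the resource is |Φ₄⁺⟩ = (1/2)Σ_{k=0}^{3}|kk⟩ ∈ ℂ⁴⊗ℂ⁴ (two ebits), A_a acts on the first qubit of ψ together with the first ℂ⁴ factor of the resource, and B_b acts on the second qubit of ψ together with the second ℂ⁴ factor (tensor factors reordered accordingly). -/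

import Mathlib

open Matrix Complex
open scoped Matrix Kronecker

noncomputable section

/-- The Pauli matrices σ₀, σ₁, σ₂, σ₃. -/
def σm : Fin 4 → Matrix (Fin 2) (Fin 2) ℂ :=
  ![1, !![0, 1; 1, 0], !![0, -I; I, 0], !![1, 0; 0, -1]]

/-- The family L: two-qubit unitaries U for which there is a unitary R such that
conjugation by U sends each R σ_j R† ⊗ I (j = 1,2,3) to a product unitary T_j ⊗ V_j. -/
def Lfam : Set (Matrix (Fin 2 × Fin 2) (Fin 2 × Fin 2) ℂ) :=
  {U | U ∈ Matrix.unitaryGroup (Fin 2 × Fin 2) ℂ ∧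
    ∃ R ∈ Matrix.unitaryGroup (Fin 2) ℂ, ∀ j : Fin 4, j ≠ 0 →
      ∃ T ∈ Matrix.unitaryGroup (Fin 2) ℂ, ∃ V ∈ Matrix.unitaryGroup (Fin 2) ℂ,
        U * ((R * σm j * Rᴴ) ⊗ₖ (1 : Matrix (Fin 2) (Fin 2) ℂ)) * Uᴴ = T ⊗ₖ V}

/-- The two-ebit resource |Φ₄⁺⟩ = (1/2)Σ_k |kk⟩ ∈ ℂ⁴⊗ℂ⁴. -/
def phi4 : Fin 4 × Fin 4 → ℂ := fun x => if x.1 = x.2 then (1 / 2 : ℂ) else 0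

/-!
Alice teleports her qubit to Bob through the first ebit, measuring in the Bell basis twisted by
`Pₐ = R σₐ R†`; Bob applies `U` to the received qubit and his own, and teleports the first output
back through the second ebit with a Bell measurement twisted by `σ_b`. Outcome `(a, b)` leaves
`(σ_bᵀ ⊗ 1) U (Pₐ ⊗ 1) ψ / 4`, and since `U ∈ L` gives `U (Pₐ ⊗ 1) = (Tₐ ⊗ Vₐ) U`, the local
unitaries `Tₐ† (σ_bᵀ)† ⊗ Vₐ†` turn it into `U ψ / 4`. Both measurements are complete because the
Paulis and their unitary conjugates twirl every matrix to a multiple of the identity.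
-/

namespace Matrix

variable {n ι κ : Type*} [Fintype n] [DecidableEq n]

/-- `∑ₐ Pₐᴴ M Pₐ = d · tr M · 1`, with `d = card n`: for `d²` operators this says that the
`Pₐ / √d` are an orthonormal basis for the Hilbert–Schmidt inner product. -/
def IsDepolarizing [Fintype ι] (P : ι → Matrix n n ℂ) : Prop :=
  ∀ M : Matrix n n ℂ, ∑ a, (P a)ᴴ * M * P a = (Fintype.card n * M.trace) • 1

section IsDepolarizing

variable [Fintype ι] {P : ι → Matrix n n ℂ}

theorem IsDepolarizing.sum_star_mul (hP : IsDepolarizing P) (i j k l : n) :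
    ∑ a, star (P a i j) * P a k l = if i = k ∧ j = l then (Fintype.card n : ℂ) else 0 := by
  have h := congrFun (congrFun (hP (single i k 1)) j) l
  simp only [sum_apply, mul_apply, single_apply, conjTranspose_apply, ite_and, mul_ite,
    mul_one, mul_zero, Finset.sum_ite_eq, Finset.mem_univ, if_true, ite_mul, zero_mul] at h
  rw [h, smul_apply, one_apply]
  split_ifs with hik hjl <;> simp_all [trace_single_eq_of_ne]

theorem IsDepolarizing.conj (hP : IsDepolarizing P) {R : Matrix n n ℂ}
    (hR : R * Rᴴ = 1) : IsDepolarizing fun a => R * P a * Rᴴ := by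
  intro M
  calc ∑ a, (R * P a * Rᴴ)ᴴ * M * (R * P a * Rᴴ)
      = R * (∑ a, (P a)ᴴ * (Rᴴ * M * R) * P a) * Rᴴ := by
        simp only [conjTranspose_mul, conjTranspose_conjTranspose, Finset.mul_sum,
          Finset.sum_mul, Matrix.mul_assoc]
    _ = (Fintype.card n * M.trace) • 1 := by
        rw [hP, trace_mul_cycle, hR, Matrix.one_mul, Matrix.mul_smul, Matrix.smul_mul,
          Matrix.mul_one, hR]

end IsDepolarizing

/-- The resource index `k` is read as the qubit pair `e k`. Alice projects her input `x` and the
half `(e k).1` onto the Bell state twisted by `P a` and keeps the half `(e k).2`. -/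
def aliceKraus (e : κ ≃ n × n) (P : ι → Matrix n n ℂ) (a : ι) : Matrix n (n × κ) ℂ :=
  of fun p xk => if (e xk.2).2 = p then P a (e xk.2).1 xk.1 else 0

/-- Bob applies `U` to `((e l).1, y)`, where `(e l).1` holds the qubit teleported by Alice, and
projects the first output and the half `(e l).2` onto the Bell state twisted by `Q b`. -/
def bobKraus (e : κ ≃ n × n) (U : Matrix (n × n) (n × n) ℂ) (Q : ι → Matrix n n ℂ) (b : ι) :
    Matrix n (n × κ) ℂ :=
  of fun q yl => ∑ m, Q b m (e yl.2).2 * U (m, q) ((e yl.2).1, yl.1)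

theorem IsDepolarizing.sum_conjTranspose_aliceKraus_mul [Fintype ι] [Fintype κ] [DecidableEq κ]
    {P : ι → Matrix n n ℂ} (hP : IsDepolarizing P) (e : κ ≃ n × n) :
    ∑ a, (aliceKraus e P a)ᴴ * aliceKraus e P a = (Fintype.card n : ℂ) • 1 := by
  ext ⟨x, k⟩ ⟨x', k'⟩
  simp only [sum_apply, mul_apply, conjTranspose_apply, aliceKraus, of_apply, smul_apply,
    one_apply, smul_eq_mul, mul_ite, mul_zero, Finset.sum_ite_eq, Finset.mem_univ, if_true]
  have hk : k = k' ↔ (e k).1 = (e k').1 ∧ (e k).2 = (e k').2 := by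
    rw [← Prod.ext_iff, e.injective.eq_iff]
  by_cases h2 : (e k).2 = (e k').2
  · simp only [h2, if_true, hP.sum_star_mul, Prod.mk.injEq, hk, true_and, mul_one, and_comm]
  · simp [h2, hk]

theorem IsDepolarizing.sum_conjTranspose_bobKraus_mul [Fintype ι] [Fintype κ] [DecidableEq κ]
    {Q : ι → Matrix n n ℂ} (hQ : IsDepolarizing Q) (e : κ ≃ n × n)
    {U : Matrix (n × n) (n × n) ℂ} (hU : Uᴴ * U = 1) :
    ∑ b, (bobKraus e U Q b)ᴴ * bobKraus e U Q b = (Fintype.card n : ℂ) • 1 := by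
  ext ⟨y, l⟩ ⟨y', l'⟩
  have hUU := congrFun (congrFun hU ((e l).1, y)) ((e l').1, y')
  simp only [mul_apply, conjTranspose_apply, one_apply, Fintype.sum_prod_type] at hUU
  simp only [sum_apply, mul_apply, conjTranspose_apply, bobKraus, of_apply, smul_apply,
    one_apply, smul_eq_mul, star_sum, star_mul', Finset.sum_mul, Finset.mul_sum]
  calc _ = ∑ q, ∑ m, ∑ m', star (U (m, q) ((e l).1, y)) * U (m', q) ((e l').1, y') *
        ∑ b, star (Q b m (e l).2) * Q b m' (e l').2 := by
        simp only [Finset.mul_sum]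
        rw [Finset.sum_comm]
        refine Fintype.sum_congr _ _ fun q => ?_
        rw [Finset.sum_comm]
        conv_rhs => rw [Finset.sum_comm]
        refine Fintype.sum_congr _ _ fun m' => ?_
        rw [Finset.sum_comm]
        exact Fintype.sum_congr _ _ fun m => Fintype.sum_congr _ _ fun b => by ring
    _ = _ := by
        simp only [hQ.sum_star_mul, ite_and, mul_ite, mul_zero, Finset.sum_ite_eq, Finset.mem_univ,
          if_true, Finset.sum_ite_irrel, Finset.sum_const_zero, ← Finset.sum_mul]
        rw [Finset.sum_comm, hUU]
        have hl : l = l' ↔ (e l).1 = (e l').1 ∧ (e l).2 = (e l').2 := by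
          rw [← Prod.ext_iff, e.injective.eq_iff]
        simp only [Prod.mk.injEq, hl]
        split_ifs <;> simp_all

theorem kronecker_aliceKraus_bobKraus_mulVec [Fintype κ] [DecidableEq κ] (e : κ ≃ n × n)
    (U : Matrix (n × n) (n × n) ℂ) (P Q : ι → Matrix n n ℂ) (a b : ι) (c : ℂ) (ψ : n × n → ℂ) :
    (aliceKraus e P a ⊗ₖ bobKraus e U Q b) *ᵥ
        (fun x => ψ (x.1.1, x.2.1) * if x.1.2 = x.2.2 then c else 0) =
      c • (((Q b)ᵀ ⊗ₖ (1 : Matrix n n ℂ)) * U * (P a ⊗ₖ (1 : Matrix n n ℂ))) *ᵥ ψ := by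
  ext ⟨p, q⟩
  rw [← mulVec_mulVec, ← mulVec_mulVec]
  simp only [mulVec, dotProduct, Fintype.sum_prod_type, kroneckerMap_apply, aliceKraus, bobKraus,
    of_apply, one_apply, transpose_apply, Pi.smul_apply, smul_eq_mul, mul_ite, mul_zero, mul_one,
    ite_mul, zero_mul, Finset.sum_ite_eq, Finset.mem_univ, if_true]
  calc _ = ∑ i, ∑ x, ∑ y, ∑ m, c * (Q b m p * (U (m, q) (i, y) * (P a i x * ψ (x, y)))) := by
        rw [Finset.sum_comm, ← e.symm.sum_comp, Fintype.sum_prod_type]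
        simp only [Equiv.apply_symm_apply, Finset.sum_ite_irrel, Finset.sum_const_zero,
          Finset.sum_ite_eq', Finset.mem_univ, if_true, Finset.mul_sum, Finset.sum_mul]
        refine Fintype.sum_congr _ _ fun i => Fintype.sum_congr _ _ fun x =>
          Fintype.sum_congr _ _ fun y => Fintype.sum_congr _ _ fun m => by ring
    _ = ∑ m, ∑ i, ∑ y, ∑ x, c * (Q b m p * (U (m, q) (i, y) * (P a i x * ψ (x, y)))) := by
        conv_rhs => rw [Finset.sum_comm]
        refine Fintype.sum_congr _ _ fun i => ?_
        rw [Finset.sum_comm]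
        conv_rhs => rw [Finset.sum_comm]
        exact Fintype.sum_congr _ _ fun y => Finset.sum_comm
    _ = _ := by simp only [Finset.mul_sum]

theorem kronecker_mul_kronecker_mul_of_intertwines {U : Matrix (n × n) (n × n) ℂ}
    {P S T V : Matrix n n ℂ} (hS : Sᴴ * S = 1) (hT : Tᴴ * T = 1) (hV : Vᴴ * V = 1)
    (hUP : U * (P ⊗ₖ (1 : Matrix n n ℂ)) = (T ⊗ₖ V) * U) :
    ((Tᴴ * Sᴴ) ⊗ₖ Vᴴ) * ((S ⊗ₖ (1 : Matrix n n ℂ)) * U * (P ⊗ₖ (1 : Matrix n n ℂ))) = U := by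
  rw [Matrix.mul_assoc, hUP, ← Matrix.mul_assoc, ← mul_kronecker_mul, Matrix.mul_one,
    ← Matrix.mul_assoc, ← mul_kronecker_mul, Matrix.mul_assoc Tᴴ,
    hS, Matrix.mul_one, hT, hV, one_kronecker_one, Matrix.one_mul]

theorem sum_conjTranspose_smul_mul_smul {m k : Type*} [Fintype m] [Fintype ι] (c : ℂ)
    (A : ι → Matrix m k ℂ) :
    ∑ a, (c • A a)ᴴ * (c • A a) = (star c * c) • ∑ a, (A a)ᴴ * A a := by
  simp only [conjTranspose_smul, Matrix.smul_mul, Matrix.mul_smul, smul_smul, mul_comm c (star c),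
    Finset.smul_sum]

end Matrix

theorem isDepolarizing_σm : IsDepolarizing σm := by
  intro M
  ext i j
  fin_cases i <;> fin_cases j <;>
    simp [σm, mul_apply, Fin.sum_univ_two, Fin.sum_univ_four, trace, conjTranspose_apply] <;>
    ring_nf <;> simp [Complex.I_sq] <;> ring_nf

theorem σm_mem_unitaryGroup (a : Fin 4) : σm a ∈ unitaryGroup (Fin 2) ℂ := by
  rw [mem_unitaryGroup_iff]
  fin_cases a <;> ext i j <;> fin_cases i <;> fin_cases j <;>
    simp [σm, mul_apply, Fin.sum_univ_two, star_eq_conjTranspose, conjTranspose_apply]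

theorem exists_intertwining_of_mem_Lfam {U : Matrix (Fin 2 × Fin 2) (Fin 2 × Fin 2) ℂ}
    (hU : U ∈ Lfam) :
    ∃ R ∈ unitaryGroup (Fin 2) ℂ, ∀ j, ∃ T ∈ unitaryGroup (Fin 2) ℂ, ∃ V ∈ unitaryGroup (Fin 2) ℂ,
      U * ((R * σm j * Rᴴ) ⊗ₖ (1 : Matrix (Fin 2) (Fin 2) ℂ)) = (T ⊗ₖ V) * U := by
  obtain ⟨hUu, R, hR, hL⟩ := hU
  have hRR : R * Rᴴ = 1 := mem_unitaryGroup_iff.mp hR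
  have hUU : Uᴴ * U = 1 := mem_unitaryGroup_iff'.mp hUu
  refine ⟨R, hR, fun j => ?_⟩
  rcases eq_or_ne j 0 with rfl | hj
  · refine ⟨1, one_mem _, 1, one_mem _, ?_⟩
    rw [show σm 0 = 1 from rfl, Matrix.mul_one, hRR, one_kronecker_one,
      Matrix.mul_one, Matrix.one_mul]
  · obtain ⟨T, hT, V, hV, hTV⟩ := hL j hj
    refine ⟨T, hT, V, hV, ?_⟩
    rw [← hTV, Matrix.mul_assoc _ Uᴴ, hUU, Matrix.mul_one]

/-- Proposition 1 of the paper (protocol U2E): any U ∈ L admits a perfect LOBC simulation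
consuming two ebits. -/
theorem lfam_two_ebit_LOBC (U : Matrix (Fin 2 × Fin 2) (Fin 2 × Fin 2) ℂ)
    (hU : U ∈ Lfam) :
    ∃ (nA nB : ℕ), nA ≤ 16 ∧ nB ≤ 16 ∧
    ∃ (A : Fin nA → Matrix (Fin 2) (Fin 2 × Fin 4) ℂ)
      (B : Fin nB → Matrix (Fin 2) (Fin 2 × Fin 4) ℂ)
      (W V : Fin nA → Fin nB → Matrix (Fin 2) (Fin 2) ℂ)
      (γ : Fin nA → Fin nB → ℂ),
      (∑ a, (A a)ᴴ * A a = 1) ∧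
      (∑ b, (B b)ᴴ * B b = 1) ∧
      (∀ a b, W a b ∈ Matrix.unitaryGroup (Fin 2) ℂ ∧
              V a b ∈ Matrix.unitaryGroup (Fin 2) ℂ) ∧
      (∑ a, ∑ b, ‖γ a b‖ ^ 2 = 1) ∧
      (∀ (ψ : Fin 2 × Fin 2 → ℂ) (a : Fin nA) (b : Fin nB),
        (W a b ⊗ₖ V a b).mulVec
            ((A a ⊗ₖ B b).mulVec fun x => ψ (x.1.1, x.2.1) * phi4 (x.1.2, x.2.2)) =
          γ a b • U.mulVec ψ) := by
  obtain ⟨R, hR, hTV⟩ := exists_intertwining_of_mem_Lfam hU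
  choose T hT V hV hUP using hTV
  have hσT (b : Fin 4) : (σm b)ᵀ ∈ unitaryGroup (Fin 2) ℂ :=
    transpose_mem_unitaryGroup_iff.mpr (σm_mem_unitaryGroup b)
  let e : Fin 4 ≃ Fin 2 × Fin 2 := (finProdFinEquiv (m := 2) (n := 2)).symm
  let s : ℂ := ((√2)⁻¹ : ℝ)
  have hs_star : star s = s := Complex.conj_ofReal _
  have hs : s * s = 1 / 2 := by
    simp only [s, ← Complex.ofReal_mul, ← mul_inv, Real.mul_self_sqrt zero_le_two]
    norm_num
  refine ⟨4, 4, by norm_num, by norm_num,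
    fun a => s • aliceKraus e (fun j => R * σm j * Rᴴ) a, fun b => s • bobKraus e U σm b,
    fun a b => (T a)ᴴ * ((σm b)ᵀ)ᴴ, fun a _ => (V a)ᴴ, fun _ _ => 1 / 4, ?_, ?_,
    fun a b => ⟨mul_mem (Unitary.star_mem (hT a)) (Unitary.star_mem (hσT b)),
      Unitary.star_mem (hV a)⟩, by norm_num, ?_⟩
  · rw [sum_conjTranspose_smul_mul_smul, hs_star, hs, (isDepolarizing_σm.conj
      (mem_unitaryGroup_iff.mp hR)).sum_conjTranspose_aliceKraus_mul e, smul_smul]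
    norm_num
  · rw [sum_conjTranspose_smul_mul_smul, hs_star, hs,
      isDepolarizing_σm.sum_conjTranspose_bobKraus_mul e (mem_unitaryGroup_iff'.mp hU.1), smul_smul]
    norm_num
  · intro ψ a b
    simp only [phi4]
    rw [smul_kronecker, kronecker_smul, smul_smul, smul_mulVec, mulVec_smul,
      kronecker_aliceKraus_bobKraus_mulVec, mulVec_smul, mulVec_mulVec,
      kronecker_mul_kronecker_mul_of_intertwines (mem_unitaryGroup_iff'.mp (hσT b))
        (mem_unitaryGroup_iff'.mp (hT a)) (mem_unitaryGroup_iff'.mp (hV a)) (hUP a), smul_smul, hs]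
    norm_num

end
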